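/- For an admissible pair (x, ε) with d even, the vector x + ν, where ν = (ε,…,ε,−ε,…,−ε) has d/2 entries equal to ε followed by d/2 entries equal to −ε, is the maximum of the ball B^∞_ε(x) with respect to majorization: x + ν ∈ B^∞_ε(x) and x + ν ⪰ x' for every x' ∈ B^∞_ε(x). -/
import Mathlib


open Finset

/-- Partial sum of the first `k` components of `x`. -/
def psum (d : ℕ) (x : Fin d → ℝ) (k : ℕ) : ℝ :=
  ∑ i ∈ Finset.univ.filter (fun i : Fin d => (i : ℕ) < k), x i

/-- The ordered probability simplex `Δ_d↓`. -/
def Simplex (d : ℕ) (x : Fin d → ℝ) : Prop :=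
  (∀ i j : Fin d, i ≤ j → x j ≤ x i) ∧ (∀ i, 0 ≤ x i) ∧ ∑ i, x i = 1

/-- Majorization: all partial sums of `x` dominate those of `y`. -/
def Maj (d : ℕ) (x y : Fin d → ℝ) : Prop :=
  ∀ k : ℕ, psum d y k ≤ psum d x k

/-- ℓ∞ distance. -/
noncomputable def dInf (d : ℕ) (x y : Fin d → ℝ) : ℝ := ⨆ i, |x i - y i|

/-- ℓ¹ distance. -/
def dOne (d : ℕ) (x y : Fin d → ℝ) : ℝ := ∑ i, |x i - y i|

/-- Extended vector: `ext d x 0 = 1`, `ext d x n = x (n-1)` for `1 ≤ n ≤ d`, and `0` beyond. -/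
noncomputable def ext (d : ℕ) (x : Fin d → ℝ) : ℕ → ℝ :=
  fun n => if h0 : n = 0 then 1 else if h : n ≤ d then x ⟨n - 1, by omega⟩ else 0

/-- An admissible pair `(x, ε)`: strictly decreasing probability vector with all gaps
(including the boundary gaps to 1 and 0) at least `2ε`. -/
def Admissible (d : ℕ) (x : Fin d → ℝ) (ε : ℝ) : Prop :=
  0 < ε ∧ (∑ i, x i = 1) ∧
    (∀ n ≤ d, ext d x (n + 1) < ext d x n) ∧
    (∀ n ≤ d, 2 * ε ≤ ext d x n - ext d x (n + 1))

/-- The vector with first `d/2` entries `ε` and last `d/2` entries `-ε`. -/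
def nuvec (d : ℕ) (ε : ℝ) : Fin d → ℝ := fun i => if (i : ℕ) < d / 2 then ε else -ε

lemma card_filter_lt (d k : ℕ) :
    (Finset.univ.filter (fun i : Fin d => (i : ℕ) < k)).card = min k d := by
  rw [Finset.card_filter]
  rw [Fin.sum_univ_eq_sum_range (fun i => if i < k then 1 else 0)]
  rw [← Finset.card_filter]
  have h : (Finset.range d).filter (· < k) = Finset.range (min k d) := by
    ext i
    simp only [Finset.mem_filter, Finset.mem_range]
    omega
  rw [h, Finset.card_range]

lemma psum_add (d k : ℕ) (y z : Fin d → ℝ) :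
    psum d (fun i => y i + z i) k = psum d y k + psum d z k := by
  simp [psum, Finset.sum_add_distrib]

theorem admissible_max_of_linf_ball (d : ℕ) (hd : 0 < d) (hdeven : Even d)
    (x : Fin d → ℝ) (hx : Simplex d x) (ε : ℝ) (hadm : Admissible d x ε) :
    (Simplex d (fun i => x i + nuvec d ε i) ∧
      dInf d (fun i => x i + nuvec d ε i) x ≤ ε) ∧
    (∀ x' : Fin d → ℝ, Simplex d x' → dInf d x' x ≤ ε →
      Maj d (fun i => x i + nuvec d ε i) x') := by
  obtain ⟨hε, hsum, hstrict, hgap⟩ := hadm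
  obtain ⟨r, hr⟩ := hdeven
  have hhalf : d / 2 + d / 2 = d := by omega
  haveI : Nonempty (Fin d) := Fin.pos_iff_nonempty.mp hd
  -- last coordinate is at least 2ε
  have hlast : 2 * ε ≤ x ⟨d - 1, by omega⟩ := by
    have := hgap d le_rfl
    have e1 : ext d x d = x ⟨d - 1, by omega⟩ := by
      simp only [_root_.ext]
      rw [dif_neg (by omega), dif_pos le_rfl]
    have e2 : ext d x (d + 1) = 0 := by
      simp only [_root_.ext]
      rw [dif_neg (by omega), dif_neg (by omega)]
    rw [e1, e2] at this; linarith
  have hxlb : ∀ i : Fin d, 2 * ε ≤ x i := by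
    intro i
    have := hx.1 i ⟨d - 1, by omega⟩ (by
      simp [Fin.le_def]; omega)
    linarith
  -- sum of nuvec is 0
  have hcard1 : (Finset.univ.filter (fun i : Fin d => (i : ℕ) < d / 2)).card = d / 2 := by
    rw [card_filter_lt]; omega
  have hcard2 : (Finset.univ.filter (fun i : Fin d => ¬ (i : ℕ) < d / 2)).card = d / 2 := by
    have := Finset.card_filter_add_card_filter_not
      (s := (Finset.univ : Finset (Fin d))) (p := fun i : Fin d => (i : ℕ) < d / 2)
    rw [hcard1, Finset.card_univ, Fintype.card_fin] at this
    omega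
  have hnusum : ∑ i, nuvec d ε i = 0 := by
    have hsplit := Finset.sum_filter_add_sum_filter_not Finset.univ
      (fun i : Fin d => (i : ℕ) < d / 2) (nuvec d ε)
    have h1 : ∑ i ∈ Finset.univ.filter (fun i : Fin d => (i : ℕ) < d / 2), nuvec d ε i
        = (d / 2 : ℕ) * ε := by
      have he : ∑ i ∈ Finset.univ.filter (fun i : Fin d => (i : ℕ) < d / 2), nuvec d ε i
          = ∑ _i ∈ Finset.univ.filter (fun i : Fin d => (i : ℕ) < d / 2), ε :=
        Finset.sum_congr rfl (fun i hi => by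
          simp only [Finset.mem_filter] at hi
          simp [nuvec, hi.2])
      rw [he, Finset.sum_const, hcard1, nsmul_eq_mul]
    have h2 : ∑ i ∈ Finset.univ.filter (fun i : Fin d => ¬ (i : ℕ) < d / 2), nuvec d ε i
        = (d / 2 : ℕ) * (-ε) := by
      have he : ∑ i ∈ Finset.univ.filter (fun i : Fin d => ¬ (i : ℕ) < d / 2), nuvec d ε i
          = ∑ _i ∈ Finset.univ.filter (fun i : Fin d => ¬ (i : ℕ) < d / 2), (-ε) :=
        Finset.sum_congr rfl (fun i hi => by
          simp only [Finset.mem_filter] at hi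
          simp [nuvec, hi.2])
      rw [he, Finset.sum_const, hcard2, nsmul_eq_mul]
    rw [h1, h2] at hsplit
    linarith
  have hsum' : ∑ i, (x i + nuvec d ε i) = 1 := by
    rw [Finset.sum_add_distrib, hsum, hnusum]; ring
  -- Simplex membership
  have hsimp : Simplex d (fun i => x i + nuvec d ε i) := by
    refine ⟨?_, ?_, hsum'⟩
    · intro i j hij
      have hxij := hx.1 i j hij
      have hij' : (i : ℕ) ≤ (j : ℕ) := hij
      by_cases hi : (i : ℕ) < d / 2 <;> by_cases hj : (j : ℕ) < d / 2 <;>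
        simp only [nuvec, if_pos, if_neg, hi, hj, if_true, if_false] <;>
        linarith
    · intro i
      have := hxlb i
      by_cases hi : (i : ℕ) < d / 2 <;>
        simp only [nuvec, hi, if_true, if_false] <;> linarith
  refine ⟨⟨hsimp, ?_⟩, ?_⟩
  · -- dInf bound
    apply ciSup_le
    intro i
    have : |x i + nuvec d ε i - x i| = |nuvec d ε i| := by ring_nf
    rw [this]
    by_cases hi : (i : ℕ) < d / 2 <;>
      simp only [nuvec, hi, if_true, if_false, abs_neg] <;>
      rw [abs_of_pos hε]
  · -- majorization
    intro x' hx' hd'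
    have hpw : ∀ i, |x' i - x i| ≤ ε := by
      intro i
      unfold dInf at hd'
      refine le_trans ?_ hd'
      exact le_ciSup (Set.Finite.bddAbove (Set.finite_range (fun j => |x' j - x j|))) i
    intro k
    rcases le_or_gt k (d / 2) with hk | hk
    · -- head case
      have hck : (Finset.univ.filter (fun i : Fin d => (i : ℕ) < k)).card = k := by
        rw [card_filter_lt]; omega
      have h1 : psum d x' k ≤ psum d x k + k * ε := by
        have : psum d x' k ≤ ∑ i ∈ Finset.univ.filter (fun i : Fin d => (i : ℕ) < k),
            (x i + ε) := by
          apply Finset.sum_le_sum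
          intro i _
          have := abs_le.mp (hpw i)
          linarith [this.2]
        rw [Finset.sum_add_distrib, Finset.sum_const, hck, nsmul_eq_mul] at this
        exact this
      have h2 : psum d (fun i => x i + nuvec d ε i) k = psum d x k + k * ε := by
        rw [psum_add]
        congr 1
        unfold psum
        have he : ∑ i ∈ Finset.univ.filter (fun i : Fin d => (i : ℕ) < k), nuvec d ε i
            = ∑ _i ∈ Finset.univ.filter (fun i : Fin d => (i : ℕ) < k), ε :=
          Finset.sum_congr rfl (fun i hi => by
            simp only [Finset.mem_filter] at hi
            have : (i : ℕ) < d / 2 := by omega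
            simp [nuvec, this])
        rw [he, Finset.sum_const, hck, nsmul_eq_mul]
      rw [h2]; exact h1
    · -- tail case: compare complements
      have hsplit : ∀ y : Fin d → ℝ, psum d y k
          = (∑ i, y i) - ∑ i ∈ Finset.univ.filter (fun i : Fin d => ¬ (i : ℕ) < k), y i := by
        intro y
        have := Finset.sum_filter_add_sum_filter_not Finset.univ
          (fun i : Fin d => (i : ℕ) < k) y
        unfold psum
        linarith
      rw [hsplit x', hsplit (fun i => x i + nuvec d ε i), hx'.2.2, hsum']
      have : ∑ i ∈ Finset.univ.filter (fun i : Fin d => ¬ (i : ℕ) < k),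
          (x i + nuvec d ε i) ≤
          ∑ i ∈ Finset.univ.filter (fun i : Fin d => ¬ (i : ℕ) < k), x' i := by
        apply Finset.sum_le_sum
        intro i hi
        simp only [Finset.mem_filter] at hi
        have hnu : nuvec d ε i = -ε := by
          have : ¬ (i : ℕ) < d / 2 := by omega
          simp [nuvec, this]
        have := abs_le.mp (hpw i)
        rw [hnu]
        linarith [this.1]
      linarith
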